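/- arXiv:2105.08000 — 2 statements merged into one kernel-verified Lean document; each statement's English description precedes it below -/
import Mathlib

section
/- Let S be a nonempty additive commutative semigroup and G a nilpotent group of nilpotency class n. Then the set of all polynomial maps f : S → G, with group law given by elementwise multiplication (f·f')(t) = f(t)·f'(t), forms a group, and this group is nilpotent of nilpotency class exactly n. -/
namespace PaperPoly

/-- `DegLE d f` means that `f : S → G` is a polynomial map of degree at most `d ∈ ℕ`:
the base case `DegLE 0 f` means `f` is constant, and `DegLE (d+1) f` means that for every
`s : S` both difference maps `L_s f : t ↦ f (s+t) * (f t)⁻¹` and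
`R_s f : t ↦ (f t)⁻¹ * f (s+t)` satisfy `DegLE d`. -/
def DegLE {S : Type*} [AddCommSemigroup S] {G : Type*} [Group G] : ℕ → (S → G) → Prop
  | 0 => fun f => ∀ t t' : S, f t = f t'
  | d + 1 => fun f => ∀ s : S,
      DegLE d (fun t => f (s + t) * (f t)⁻¹) ∧ DegLE d (fun t => (f t)⁻¹ * f (s + t))

def IsPoly {S : Type*} [AddCommSemigroup S] {G : Type*} [Group G] (f : S → G) : Prop :=
  ∃ d : ℕ, DegLE d f

/-!
Leibman's argument. Let `γ` be the lower central series (with `γ 0 = G`) and, for `f` and `g` of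
degree `< d`, let `F i = γ (i / d)`. Since `F k = G` for `k < d` and the `d`-th differences of `f`
and `g` are trivial, their `k`-th differences take values in `F k` for every `k`. As
`⁅γ i, γ j⁆ ≤ γ (i + j + 1)`, the filtration satisfies `⁅F i, F j⁆ ≤ F (i + j)`, and maps adapted
to such a filtration are closed under products and commutators, by induction on the depth of
differencing. If `G` has class `c`, then `F (c d + 1)` is trivial, so the differences of `f * g`
of order `c d + 1` vanish and `f * g` is polynomial. The class of the group of polynomial maps is
at most that of `S → G`, hence at most that of `G`, and at least that of its image `G` under
evaluation at a point.
-/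

open scoped commutatorElement

section LowerCentralSeries

variable {G : Type*} [Group G]

theorem commutator_commutator_le_of_rotate {A B C N : Subgroup G} [N.Normal]
    (h₁ : ⁅⁅B, C⁆, A⁆ ≤ N) (h₂ : ⁅⁅C, A⁆, B⁆ ≤ N) : ⁅⁅A, B⁆, C⁆ ≤ N := by
  have mod_N : ∀ X Y Z : Subgroup G, ⁅⁅X, Y⁆, Z⁆ ≤ N ↔
      ⁅⁅X.map (QuotientGroup.mk' N), Y.map (QuotientGroup.mk' N)⁆,
        Z.map (QuotientGroup.mk' N)⁆ = ⊥ := fun X Y Z => by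
    rw [← Subgroup.map_commutator, ← Subgroup.map_commutator, Subgroup.map_eq_bot_iff,
      QuotientGroup.ker_mk']
  rw [mod_N] at h₁ h₂ ⊢
  exact Subgroup.commutator_commutator_eq_bot_of_rotate h₁ h₂

theorem commutator_lowerCentralSeries_le (i j : ℕ) :
    ⁅(⊤ : Subgroup G).lowerCentralSeries i, (⊤ : Subgroup G).lowerCentralSeries j⁆ ≤
      (⊤ : Subgroup G).lowerCentralSeries (i + j + 1) := by
  induction j generalizing i with
  | zero => rfl
  | succ j ih =>
    rw [Subgroup.lowerCentralSeries_succ, Subgroup.commutator_comm]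
    apply commutator_commutator_le_of_rotate
    · rw [Subgroup.commutator_comm ⊤, ← Subgroup.lowerCentralSeries_succ]
      exact (ih (i + 1)).trans_eq (congrArg _ (by omega))
    · refine (Subgroup.commutator_mono (ih i) le_rfl).trans_eq ?_
      rw [← Subgroup.lowerCentralSeries_succ]
      exact congrArg _ (by omega)

theorem commutator_lowerCentralSeries_div_le (d i j : ℕ) :
    ⁅(⊤ : Subgroup G).lowerCentralSeries (i / d), (⊤ : Subgroup G).lowerCentralSeries (j / d)⁆ ≤
      (⊤ : Subgroup G).lowerCentralSeries ((i + j) / d) :=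
  (commutator_lowerCentralSeries_le _ _).trans
    (Subgroup.lowerCentralSeries_antitone _ (Nat.add_div_le_div_add_div_add_one i j d))

end LowerCentralSeries

section Pi

variable {ι : Type*} {G : Type*} [Group G] [Group.IsNilpotent G]

instance : Group.IsNilpotent (ι → G) :=
  Group.isNilpotent_pi_of_bounded_class _ fun _ => le_rfl

theorem nilpotencyClass_pi_const_le : Group.nilpotencyClass (ι → G) ≤ Group.nilpotencyClass G := by
  refine Subgroup.lowerCentralSeries_eq_bot_iff_nilpotencyClass_le.mp (le_bot_iff.mp ?_)
  refine (Subgroup.top_lowerCentralSeries_pi_le _).trans (le_bot_iff.mpr ?_)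
  exact (Subgroup.pi_eq_bot_iff _).mpr fun _ => Subgroup.lowerCentralSeries_nilpotencyClass

end Pi

section Differences

variable {S : Type*} [AddCommSemigroup S] {G : Type*} [Group G]

def leftDiff (s : S) (f : S → G) : S → G := fun t => f (s + t) * (f t)⁻¹

def rightDiff (s : S) (f : S → G) : S → G := fun t => (f t)⁻¹ * f (s + t)

theorem degLE_succ_iff {d : ℕ} {f : S → G} :
    DegLE (d + 1) f ↔ ∀ s, DegLE d (leftDiff s f) ∧ DegLE d (rightDiff s f) :=
  Iff.rfl

theorem leftDiff_inv (s : S) (f : S → G) : leftDiff s f⁻¹ = (rightDiff s f)⁻¹ := by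
  funext t
  simp [leftDiff, rightDiff]

theorem rightDiff_inv (s : S) (f : S → G) : rightDiff s f⁻¹ = (leftDiff s f)⁻¹ := by
  funext t
  simp [leftDiff, rightDiff]

theorem leftDiff_mul (s : S) (f g : S → G) :
    leftDiff s (f * g) = leftDiff s f * (f * leftDiff s g * f⁻¹) := by
  funext t
  simp only [leftDiff, Pi.mul_apply, Pi.inv_apply]
  group

/-- Every factor involves `leftDiff s a` or `leftDiff s b` inside a commutator, so it lies one
filtration level deeper than `⁅a, b⁆`. -/
theorem leftDiff_commutator (s : S) (a b : S → G) :
    leftDiff s ⁅a, b⁆ =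
      leftDiff s a * ⁅a, leftDiff s b⁆ * (leftDiff s a)⁻¹ *
        ⁅leftDiff s a * leftDiff s b, ⁅a, b⁆⁆ *
        (⁅a, b⁆ * (⁅leftDiff s a, leftDiff s b⁆ *
          (leftDiff s b * ⁅leftDiff s a, b⁆ * (leftDiff s b)⁻¹)) * ⁅a, b⁆⁻¹) := by
  funext t
  simp only [leftDiff, commutatorElement_def, Pi.mul_apply, Pi.inv_apply]
  group

theorem leftDiff_eq_one_of_degLE_zero {f : S → G} (hf : DegLE 0 f) (s : S) :
    leftDiff s f = 1 := by
  funext t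
  simp [leftDiff, hf (s + t) t]

theorem rightDiff_eq_one_of_degLE_zero {f : S → G} (hf : DegLE 0 f) (s : S) :
    rightDiff s f = 1 := by
  funext t
  simp [rightDiff, hf (s + t) t]

theorem degLE_zero_of_leftDiff_eq_one {f : S → G} (hf : ∀ s, leftDiff s f = 1) : DegLE 0 f := by
  have shift_eq : ∀ s t, f (s + t) = f t := fun s t =>
    mul_inv_eq_one.mp (congrFun (hf s) t)
  intro t t'
  rw [← shift_eq t' t, add_comm, shift_eq]

theorem DegLE.inv {d : ℕ} {f : S → G} (hf : DegLE d f) : DegLE d f⁻¹ := by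
  induction d generalizing f with
  | zero => exact fun t t' => congrArg Inv.inv (hf t t')
  | succ d ih =>
    rw [degLE_succ_iff] at hf ⊢
    intro s
    rw [leftDiff_inv, rightDiff_inv]
    exact ⟨ih (hf s).2, ih (hf s).1⟩

theorem IsPoly.inv {f : S → G} (hf : IsPoly f) : IsPoly f⁻¹ :=
  hf.imp fun _ => DegLE.inv

end Differences

section FilteredPoly

variable {S : Type*} [AddCommSemigroup S] {G : Type*} [Group G] (F : ℕ → Subgroup G)

/-- Polynomial maps adapted to the filtration `F` in the sense of Leibman, with the differencing
truncated at depth `m` so that the definition is structural. -/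
def IsFilteredPoly : ℕ → ℕ → (S → G) → Prop
  | 0, k, f => ∀ t, f t ∈ F k
  | m + 1, k, f => (∀ t, f t ∈ F k) ∧
      ∀ s, IsFilteredPoly m (k + 1) (leftDiff s f) ∧ IsFilteredPoly m (k + 1) (rightDiff s f)

variable {F} {m k : ℕ} {f g : S → G}

theorem IsFilteredPoly.apply_mem (hf : IsFilteredPoly F m k f) (t : S) : f t ∈ F k := by
  cases m with
  | zero => exact hf t
  | succ m => exact hf.1 t

theorem IsFilteredPoly.of_succ (hf : IsFilteredPoly F (m + 1) k f) : IsFilteredPoly F m k f := by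
  induction m generalizing k f with
  | zero => exact hf.1
  | succ m ih => exact ⟨hf.1, fun s => ⟨ih (hf.2 s).1, ih (hf.2 s).2⟩⟩

theorem IsFilteredPoly.anti (hF : Antitone F) {k' : ℕ} (hk : k ≤ k')
    (hf : IsFilteredPoly F m k' f) : IsFilteredPoly F m k f := by
  induction m generalizing k k' f with
  | zero => exact fun t => hF hk (hf t)
  | succ m ih =>
    exact ⟨fun t => hF hk (hf.1 t), fun s => ⟨ih (by omega) (hf.2 s).1, ih (by omega) (hf.2 s).2⟩⟩

theorem isFilteredPoly_one : IsFilteredPoly F m k (1 : S → G) := by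
  induction m generalizing k with
  | zero => exact fun _ => one_mem _
  | succ m ih =>
    have hL : ∀ s, leftDiff s (1 : S → G) = 1 := fun s => by funext t; simp [leftDiff]
    have hR : ∀ s, rightDiff s (1 : S → G) = 1 := fun s => by funext t; simp [rightDiff]
    exact ⟨fun _ => one_mem _, fun s => by rw [hL, hR]; exact ⟨ih, ih⟩⟩

theorem IsFilteredPoly.inv (hf : IsFilteredPoly F m k f) : IsFilteredPoly F m k f⁻¹ := by
  induction m generalizing k f with
  | zero => exact fun t => inv_mem (hf t)
  | succ m ih =>
    refine ⟨fun t => inv_mem (hf.1 t), fun s => ?_⟩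
    rw [leftDiff_inv, rightDiff_inv]
    exact ⟨ih (hf.2 s).2, ih (hf.2 s).1⟩

/-- Since `rightDiff s f = (leftDiff s f⁻¹)⁻¹`, left differences suffice. -/
theorem isFilteredPoly_succ_of_leftDiff (hf : ∀ t, f t ∈ F k)
    (hL : ∀ s, IsFilteredPoly F m (k + 1) (leftDiff s f))
    (hL' : ∀ s, IsFilteredPoly F m (k + 1) (leftDiff s f⁻¹)) :
    IsFilteredPoly F (m + 1) k f := by
  refine ⟨hf, fun s => ⟨hL s, ?_⟩⟩
  simpa only [leftDiff_inv, inv_inv] using (hL' s).inv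

end FilteredPoly

section Closure

variable {G : Type*} [Group G]

structure IsFilteredPolyClosed (S : Type*) [AddCommSemigroup S] (F : ℕ → Subgroup G) (m : ℕ) :
    Prop where
  mul {k : ℕ} {f g : S → G} :
    IsFilteredPoly F m k f → IsFilteredPoly F m k g → IsFilteredPoly F m k (f * g)
  commutator {i j : ℕ} {a b : S → G} :
    IsFilteredPoly F m i a → IsFilteredPoly F m j b → IsFilteredPoly F m (i + j) ⁅a, b⁆

variable {S : Type*} [AddCommSemigroup S] {F : ℕ → Subgroup G} {m : ℕ}

namespace IsFilteredPolyClosed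

theorem conj (hm : IsFilteredPolyClosed S F m) {k : ℕ} {x y : S → G}
    (hx : IsFilteredPoly F m 0 x) (hy : IsFilteredPoly F m k y) :
    IsFilteredPoly F m k (x * y * x⁻¹) := by
  have hxy : IsFilteredPoly F m k ⁅x, y⁆ := by simpa only [zero_add] using hm.commutator hx hy
  rw [show x * y * x⁻¹ = ⁅x, y⁆ * y by simp only [commutatorElement_def]; group]
  exact hm.mul hxy hy

theorem leftDiff_mul (hm : IsFilteredPolyClosed S F m) (hF : Antitone F) {k : ℕ} {f g : S → G}
    (hf : IsFilteredPoly F (m + 1) k f) (hg : IsFilteredPoly F (m + 1) k g) (s : S) :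
    IsFilteredPoly F m (k + 1) (leftDiff s (f * g)) := by
  rw [PaperPoly.leftDiff_mul]
  exact hm.mul (hf.2 s).1 (hm.conj (hf.of_succ.anti hF k.zero_le) (hg.2 s).1)

theorem leftDiff_commutator (hm : IsFilteredPolyClosed S F m) (hF : Antitone F) {i j : ℕ}
    {a b : S → G} (ha : IsFilteredPoly F (m + 1) i a) (hb : IsFilteredPoly F (m + 1) j b)
    (s : S) : IsFilteredPoly F m (i + j + 1) (leftDiff s ⁅a, b⁆) := by
  have lower {k k' : ℕ} {x : S → G} (h : k ≤ k') (hx : IsFilteredPoly F m k' x) :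
      IsFilteredPoly F m k x := hx.anti hF h
  have hα : IsFilteredPoly F m (i + 1) (leftDiff s a) := (ha.2 s).1
  have hβ : IsFilteredPoly F m (j + 1) (leftDiff s b) := (hb.2 s).1
  have hc : IsFilteredPoly F m (i + j) ⁅a, b⁆ := hm.commutator ha.of_succ hb.of_succ
  have hαβ : IsFilteredPoly F m 1 (leftDiff s a * leftDiff s b) :=
    hm.mul (lower (by omega) hα) (lower (by omega) hβ)
  rw [PaperPoly.leftDiff_commutator]
  refine hm.mul (hm.mul ?_ ?_) (hm.conj (lower (by omega) hc) (hm.mul ?_ ?_))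
  · exact hm.conj (lower (by omega) hα) (lower (by omega) (hm.commutator ha.of_succ hβ))
  · exact lower (by omega) (hm.commutator hαβ hc)
  · exact lower (by omega) (hm.commutator hα hβ)
  · exact hm.conj (lower (by omega) hβ) (lower (by omega) (hm.commutator hα hb.of_succ))

theorem succ (hm : IsFilteredPolyClosed S F m) (hF : Antitone F)
    (hFc : ∀ i j, ⁅F i, F j⁆ ≤ F (i + j)) : IsFilteredPolyClosed S F (m + 1) where
  mul {k f g} hf hg := by
    refine isFilteredPoly_succ_of_leftDiff
      (fun t => mul_mem (hf.apply_mem t) (hg.apply_mem t)) (hm.leftDiff_mul hF hf hg) fun s => ?_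
    rw [mul_inv_rev]
    exact hm.leftDiff_mul hF hg.inv hf.inv s
  commutator {i j a b} ha hb := by
    refine isFilteredPoly_succ_of_leftDiff
      (fun t => hFc i j (Subgroup.commutator_mem_commutator (ha.apply_mem t) (hb.apply_mem t)))
      (hm.leftDiff_commutator hF ha hb) fun s => ?_
    rw [commutatorElement_inv, add_comm i j]
    exact hm.leftDiff_commutator hF hb ha s

end IsFilteredPolyClosed

theorem isFilteredPolyClosed (hF : Antitone F) (hFc : ∀ i j, ⁅F i, F j⁆ ≤ F (i + j)) :
    ∀ m, IsFilteredPolyClosed S F m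
  | 0 => ⟨fun hf hg t => mul_mem (hf t) (hg t),
      fun ha hb t => hFc _ _ (Subgroup.commutator_mem_commutator (ha t) (hb t))⟩
  | m + 1 => (isFilteredPolyClosed hF hFc m).succ hF hFc

end Closure

section Degree

variable {S : Type*} [AddCommSemigroup S] {G : Type*} [Group G] {F : ℕ → Subgroup G}

theorem DegLE.isFilteredPoly (hF : Antitone F) {e k : ℕ} {f : S → G} (hf : DegLE e f)
    (htop : F (k + e) = ⊤) (m : ℕ) : IsFilteredPoly F m k f := by
  induction m generalizing k e f with
  | zero => exact fun t => hF (Nat.le_add_right k e) (htop ▸ Subgroup.mem_top _)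
  | succ m ih =>
    refine ⟨(ih hf htop).apply_mem, fun s => ?_⟩
    cases e with
    | zero =>
      rw [leftDiff_eq_one_of_degLE_zero hf, rightDiff_eq_one_of_degLE_zero hf]
      exact ⟨isFilteredPoly_one, isFilteredPoly_one⟩
    | succ e =>
      rw [← Nat.add_assoc, Nat.add_right_comm k e 1] at htop
      exact ⟨ih (hf s).1 htop, ih (hf s).2 htop⟩

theorem IsFilteredPoly.degLE {q k : ℕ} {f : S → G} (hf : IsFilteredPoly F (q + 1) k f)
    (hbot : F (k + q + 1) = ⊥) : DegLE q f := by
  induction q generalizing k f with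
  | zero =>
    refine degLE_zero_of_leftDiff_eq_one fun s => funext fun t => ?_
    simpa [hbot] using (hf.2 s).1 t
  | succ q ih =>
    rw [← Nat.add_assoc, Nat.add_right_comm k q 1] at hbot
    exact fun s => ⟨ih (hf.2 s).1 hbot, ih (hf.2 s).2 hbot⟩

end Degree

section PolynomialMaps

variable {S : Type*} [AddCommSemigroup S] {G : Type*} [Group G] [Group.IsNilpotent G]

theorem IsPoly.mul {f g : S → G} (hf : IsPoly f) (hg : IsPoly g) : IsPoly (f * g) := by
  obtain ⟨d₁, hf⟩ := hf
  obtain ⟨d₂, hg⟩ := hg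
  set d := d₁ + d₂ + 1
  set c := Group.nilpotencyClass G
  let F : ℕ → Subgroup G := fun i => (⊤ : Subgroup G).lowerCentralSeries (i / d)
  have hF : Antitone F := fun i j h =>
    Subgroup.lowerCentralSeries_antitone _ (Nat.div_le_div_right h)
  have htop : ∀ e < d, F (0 + e) = ⊤ := fun e he => by
    simp only [F, zero_add, Nat.div_eq_of_lt he, Subgroup.lowerCentralSeries_zero]
  have hbot : F (0 + c * d + 1) = ⊥ := by
    refine Subgroup.lowerCentralSeries_eq_bot_iff_nilpotencyClass_le.mpr ?_
    rw [zero_add, Nat.le_div_iff_mul_le (by omega)]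
    exact Nat.le_succ _
  have hfg := (isFilteredPolyClosed hF (commutator_lowerCentralSeries_div_le d) (c * d + 1)).mul
    (hf.isFilteredPoly hF (htop d₁ (by omega)) _) (hg.isFilteredPoly hF (htop d₂ (by omega)) _)
  exact ⟨c * d, hfg.degLE hbot⟩

variable (S G) in
def polynomialMaps : Subgroup (S → G) where
  carrier := {f | IsPoly f}
  mul_mem' := IsPoly.mul
  one_mem' := ⟨0, fun _ _ => rfl⟩
  inv_mem' := IsPoly.inv

theorem nilpotencyClass_polynomialMaps [Nonempty S] :
    Group.nilpotencyClass (polynomialMaps S G) = Group.nilpotencyClass G := by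
  refine le_antisymm ((Subgroup.nilpotencyClass_le _).trans nilpotencyClass_pi_const_le) ?_
  obtain ⟨x⟩ := ‹Nonempty S›
  exact Group.nilpotencyClass_le_of_surjective
    ((Pi.evalMonoidHom (fun _ => G) x).comp (polynomialMaps S G).subtype)
    fun y => ⟨⟨fun _ => y, 0, fun _ _ => rfl⟩, rfl⟩

end PolynomialMaps

/-- Let `S` be a nonempty additive commutative semigroup and `G` a nilpotent group of
nilpotency class `n`. Then the set of all polynomial maps `S → G` is a subgroup of the
group of all maps `S → G` with pointwise multiplication, and this group of polynomial
maps is nilpotent of nilpotency class exactly `n`. -/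
theorem group_of_polynomial_maps {S : Type*} [AddCommSemigroup S] [Nonempty S]
    {G : Type*} [Group G] [Group.IsNilpotent G] (n : ℕ)
    (hn : Group.nilpotencyClass G = n) :
    ∃ H : Subgroup (S → G), ((H : Set (S → G)) = {f : S → G | IsPoly f}) ∧
      ∃ hnil : Group.IsNilpotent ↥H, @Group.nilpotencyClass ↥H _ = n :=
  ⟨polynomialMaps S G, rfl, inferInstance, nilpotencyClass_polynomialMaps.trans hn⟩

end PaperPoly
end

section
/- Let S be an additive commutative semigroup and G a nilpotent group of class n. Let f, f' : S → G be polynomial maps of degree ≤ d and ≤ d' respectively, such that f(S) ⊆ C^kG and f'(S) ⊆ C^{k'}G for the lower central series of G, with k + k' ≥ n + 1. Then the elementwise product f·f' : S → G has image contained in C^{min{k,k'}}G and is a polynomial map of degree ≤ max{d, d'}. -/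
namespace Subgroup

variable {G : Type*} [Group G]

theorem commute_of_commutator_eq_bot {H K : Subgroup G} (hHK : ⁅H, K⁆ = ⊥) {h k : G}
    (hh : h ∈ H) (hk : k ∈ K) : Commute h k :=
  ((mem_centralizer_iff.mp (commutator_eq_bot_iff_le_centralizer.mp hHK hh)) k hk).symm

/-- The three subgroups lemma modulo a normal subgroup. -/
theorem commutator_commutator_le_of_rotate {H₁ H₂ H₃ N : Subgroup G} [N.Normal]
    (h1 : ⁅⁅H₂, H₃⁆, H₁⁆ ≤ N) (h2 : ⁅⁅H₃, H₁⁆, H₂⁆ ≤ N) : ⁅⁅H₁, H₂⁆, H₃⁆ ≤ N := by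
  rw [← QuotientGroup.ker_mk' N, ← map_eq_bot_iff] at h1 h2 ⊢
  simp only [map_commutator] at h1 h2 ⊢
  exact commutator_commutator_eq_bot_of_rotate h1 h2

theorem commutator_lowerCentralSeries_le (m n : ℕ) :
    ⁅(⊤ : Subgroup G).lowerCentralSeries m, (⊤ : Subgroup G).lowerCentralSeries n⁆ ≤
      (⊤ : Subgroup G).lowerCentralSeries (m + n + 1) := by
  induction n generalizing m with
  | zero => exact le_rfl
  | succ n ih =>
    rw [lowerCentralSeries_succ, commutator_comm]
    apply commutator_commutator_le_of_rotate
    · rw [commutator_comm ⊤, ← lowerCentralSeries_succ]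
      exact (ih (m + 1)).trans_eq (by congr 1; omega)
    · exact commutator_mono (ih m) le_rfl

end Subgroup

namespace PaperPoly

section DegLE

variable {S : Type*} [AddCommSemigroup S] {G : Type*} [Group G]

theorem DegLE.succ {d : ℕ} {f : S → G} (hf : DegLE d f) : DegLE (d + 1) f := by
  induction d generalizing f with
  | zero =>
    intro s
    constructor <;> intro t t' <;>
      simp only [hf (s + t) t, hf (s + t') t', mul_inv_cancel, inv_mul_cancel]
  | succ d ih => exact fun s => ⟨ih (hf s).1, ih (hf s).2⟩

theorem DegLE.mono {d e : ℕ} (hde : d ≤ e) {f : S → G} (hf : DegLE d f) : DegLE e f := by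
  induction hde with
  | refl => exact hf
  | step _ ih => exact ih.succ

/-- The identity `L_s (f g) = L_s f · L_s g` for maps with commuting values. -/
theorem mul_mul_mul_inv_eq_of_commute {a b c e : G} (hcb : Commute c b) (hce : Commute c e) :
    a * b * (c * e)⁻¹ = a * c⁻¹ * (b * e⁻¹) := by
  calc a * b * (c * e)⁻¹ = a * ((b * e⁻¹) * c⁻¹) := by group
    _ = a * (c⁻¹ * (b * e⁻¹)) := by rw [((hcb.mul_right hce.inv_right).inv_left).eq]
    _ = a * c⁻¹ * (b * e⁻¹) := by group

/-- The identity `R_s (f g) = R_s f · R_s g` for maps with commuting values. -/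
theorem mul_inv_mul_mul_eq_of_commute {a b c e : G} (hec : Commute e c) (hea : Commute e a) :
    (c * e)⁻¹ * (a * b) = c⁻¹ * a * (e⁻¹ * b) := by
  calc (c * e)⁻¹ * (a * b) = (e⁻¹ * (c⁻¹ * a)) * b := by group
    _ = ((c⁻¹ * a) * e⁻¹) * b := by rw [((hec.inv_right.mul_right hea).inv_left).eq]
    _ = c⁻¹ * a * (e⁻¹ * b) := by group

theorem DegLE.mul_of_commutator_eq_bot {H K : Subgroup G} (hHK : ⁅H, K⁆ = ⊥) {d : ℕ}
    {f g : S → G} (hfH : ∀ t, f t ∈ H) (hgK : ∀ t, g t ∈ K) (hf : DegLE d f) (hg : DegLE d g) :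
    DegLE d (fun t => f t * g t) := by
  induction d generalizing f g with
  | zero => intro t t'; simp only [hf t t', hg t t']
  | succ d ih =>
    have hcomm : ∀ t t', Commute (f t) (g t') := fun t t' =>
      Subgroup.commute_of_commutator_eq_bot hHK (hfH t) (hgK t')
    intro s
    constructor
    · have hL := ih (fun t => mul_mem (hfH (s + t)) (inv_mem (hfH t)))
        (fun t => mul_mem (hgK (s + t)) (inv_mem (hgK t))) (hf s).1 (hg s).1
      simpa only [mul_mul_mul_inv_eq_of_commute (hcomm _ _) (hcomm _ _)] using hL
    · have hR := ih (fun t => mul_mem (inv_mem (hfH t)) (hfH (s + t)))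
        (fun t => mul_mem (inv_mem (hgK t)) (hgK (s + t))) (hf s).2 (hg s).2
      simpa only [mul_inv_mul_mul_eq_of_commute (hcomm _ _).symm (hcomm _ _).symm] using hR

end DegLE

theorem product_of_high_lc_height_polynomial_maps_general {S : Type*} [AddCommSemigroup S]
    {G : Type*} [Group G] [Group.IsNilpotent G] (n : ℕ)
    (hn : Group.nilpotencyClass G = n)
    (f f' : S → G) (d d' : ℕ) (hf : DegLE d f) (hf' : DegLE d' f')
    (k k' : ℕ)
    (hfk : ∀ t : S, f t ∈ (⊤ : Subgroup G).lowerCentralSeries (k - 1))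
    (hfk' : ∀ t : S, f' t ∈ (⊤ : Subgroup G).lowerCentralSeries (k' - 1))
    (hkk' : n + 1 ≤ k + k') :
    (∀ t : S, f t * f' t ∈ (⊤ : Subgroup G).lowerCentralSeries (min k k' - 1)) ∧
      DegLE (max d d') (fun t => f t * f' t) := by
  have hlcs_comm : ⁅(⊤ : Subgroup G).lowerCentralSeries (k - 1),
      (⊤ : Subgroup G).lowerCentralSeries (k' - 1)⁆ = ⊥ := by
    refine le_bot_iff.mp <| (Subgroup.commutator_lowerCentralSeries_le _ _).trans ?_
    rw [← Subgroup.lowerCentralSeries_nilpotencyClass (G := G), hn]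
    exact Subgroup.lowerCentralSeries_antitone _ (by omega)
  refine ⟨fun t => mul_mem ?_ ?_, ?_⟩
  · exact Subgroup.lowerCentralSeries_antitone _ (by omega) (hfk t)
  · exact Subgroup.lowerCentralSeries_antitone _ (by omega) (hfk' t)
  · exact (hf.mono (le_max_left d d')).mul_of_commutator_eq_bot hlcs_comm hfk hfk'
      (hf'.mono (le_max_right d d'))

/-- Let `G` be a nilpotent group of class `n` and `S` an additive commutative semigroup.
Let `f, f' : S → G` be polynomial maps of degree `≤ d` resp. `≤ d'` whose images lie in
the terms `C^k G` resp. `C^{k'} G` of the lower central series of `G` (with the paper's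
convention `C^1 G = G`, so `C^k G` is Mathlib's `lowerCentralSeries G (k-1)`), where
`k + k' ≥ n + 1`. Then the elementwise product `t ↦ f t * f' t` has image contained in
`C^{min k k'} G` and is a polynomial map of degree `≤ max d d'`. -/
theorem product_of_high_lc_height_polynomial_maps {S : Type*} [AddCommSemigroup S]
    [Nonempty S] {G : Type*} [Group G] [Group.IsNilpotent G] (n : ℕ)
    (hn : Group.nilpotencyClass G = n)
    (f f' : S → G) (d d' : ℕ) (hf : DegLE d f) (hf' : DegLE d' f')
    (k k' : ℕ) (hk : 1 ≤ k) (hk' : 1 ≤ k')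
    (hfk : ∀ t : S, f t ∈ (⊤ : Subgroup G).lowerCentralSeries (k - 1))
    (hfk' : ∀ t : S, f' t ∈ (⊤ : Subgroup G).lowerCentralSeries (k' - 1))
    (hkk' : n + 1 ≤ k + k') :
    (∀ t : S, f t * f' t ∈ (⊤ : Subgroup G).lowerCentralSeries (min k k' - 1)) ∧
      DegLE (max d d') (fun t => f t * f' t) :=
  product_of_high_lc_height_polynomial_maps_general n hn f f' d d' hf hf' k k' hfk hfk' hkk'

end PaperPoly
end
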